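/- (Algebraic Lemma) Let (x,y,z) be an admissible triple of real numbers satisfying x² + y² + z² − xyz > 4 and |x| ≤ 2, |y| ≤ 2, |z| ≤ 2. Then there exists an element β of the group of bijections of ℝ³ generated by β₁ and β₂ such that at least one coordinate of β(x,y,z) has absolute value strictly greater than 2. -/

import Mathlib

/-- The braid-group generator `β₁`, as a bijection of `ℝ³`. -/
def braidEquiv₁ : Equiv.Perm (ℝ × ℝ × ℝ) where
  toFun p := (-p.1, p.2.2 - p.1 * p.2.1, p.2.1)
  invFun p := (-p.1, p.2.2, p.2.1 - p.1 * p.2.2)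
  left_inv := by rintro ⟨a, b, c⟩; simp only [Prod.mk.injEq]; exact ⟨by (first | rfl | ring_nf | simp), by (first | rfl | ring_nf | simp), by (first | rfl | ring_nf | simp)⟩
  right_inv := by rintro ⟨a, b, c⟩; simp only [Prod.mk.injEq]; exact ⟨by (first | rfl | ring_nf | simp), by (first | rfl | ring_nf | simp), by (first | rfl | ring_nf | simp)⟩

/-- The braid-group generator `β₂`, as a bijection of `ℝ³`. -/
def braidEquiv₂ : Equiv.Perm (ℝ × ℝ × ℝ) where
  toFun p := (p.2.2, -p.2.1, p.1 - p.2.1 * p.2.2)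
  invFun p := (p.2.2 - p.1 * p.2.1, -p.2.1, p.1)
  left_inv := by rintro ⟨a, b, c⟩; simp only [Prod.mk.injEq]; exact ⟨by (first | rfl | ring_nf | simp), by (first | rfl | ring_nf | simp), by (first | rfl | ring_nf | simp)⟩
  right_inv := by rintro ⟨a, b, c⟩; simp only [Prod.mk.injEq]; exact ⟨by (first | rfl | ring_nf | simp), by (first | rfl | ring_nf | simp), by (first | rfl | ring_nf | simp)⟩

/-- The braid group: the group of bijections of `ℝ³` generated by `β₁` and `β₂`. -/
def braidSubgroup : Subgroup (Equiv.Perm (ℝ × ℝ × ℝ)) :=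
  Subgroup.closure {braidEquiv₁, braidEquiv₂}

/-- A triple is admissible if at most one of its coordinates equals zero. -/
def Admissible (p : ℝ × ℝ × ℝ) : Prop :=
  ¬(p.1 = 0 ∧ p.2.1 = 0) ∧ ¬(p.1 = 0 ∧ p.2.2 = 0) ∧ ¬(p.2.1 = 0 ∧ p.2.2 = 0)

/-- An admissible triple is good if every braid image of it has all coordinates of the
form `-2 cos (π r)` with `r ∈ [0,1]` rational. -/
def Good (p : ℝ × ℝ × ℝ) : Prop :=
  Admissible p ∧ ∀ g ∈ braidSubgroup, ∃ r₁ r₂ r₃ : ℚ,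
    0 ≤ r₁ ∧ r₁ ≤ 1 ∧ 0 ≤ r₂ ∧ r₂ ≤ 1 ∧ 0 ≤ r₃ ∧ r₃ ≤ 1 ∧
    g p = (-2 * Real.cos (Real.pi * r₁), -2 * Real.cos (Real.pi * r₂),
           -2 * Real.cos (Real.pi * r₃))

/-- Two triples are equivalent when one is obtained from the other by changing the signs
of exactly two of the three coordinates (or by changing no signs). -/
def TripleEquiv (p q : ℝ × ℝ × ℝ) : Prop :=
  q = p ∨ q = (p.1, -p.2.1, -p.2.2) ∨ q = (-p.1, p.2.1, -p.2.2) ∨ q = (-p.1, -p.2.1, p.2.2)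

/-!
The cubic `κ(x, y, z) = x² + y² + z² - xyz` is braid invariant. If the whole orbit of `p` stayed in
the cube `[-2, 2]³`, its closure would be compact, so some `q` in it maximizes `x² + y² + z²`.
The closure is still invariant under `β₁`, `β₁⁻¹`, `β₂`, which replace one coordinate of `q` by
its Vieta partner for `κ` (e.g. `z ↦ xy - z`) up to signs and order; maximality therefore says that
no Vieta move increases a coordinate in absolute value. Together with `|x|, |y|, |z| ≤ 2` this
forces `κ(q) ≤ 4`, whereas `κ(q) = κ(p) > 4`.
-/

section ClosureOrbit

variable {X : Type*} [TopologicalSpace X] {G : Subgroup (Equiv.Perm X)} {p q : X}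

theorem apply_mem_closure_orbit {g : Equiv.Perm X} (hg : g ∈ G) (hgc : Continuous g)
    (hq : q ∈ closure (MulAction.orbit G p)) : g q ∈ closure (MulAction.orbit G p) :=
  map_mem_closure hgc hq <| by
    rintro _ ⟨h, rfl⟩
    exact ⟨⟨g, hg⟩ * h, mul_smul _ _ _⟩

theorem eq_of_mem_closure_orbit {Y : Type*} [TopologicalSpace Y] [T2Space Y] {f : X → Y}
    (hf : Continuous f) (hinv : ∀ g ∈ G, ∀ x, f (g x) = f x)
    (hq : q ∈ closure (MulAction.orbit G p)) : f q = f p :=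
  closure_minimal (by rintro _ ⟨g, rfl⟩; exact hinv g g.2 p) (isClosed_eq hf continuous_const) hq

end ClosureOrbit

theorem mem_closedBall_zero_iff_abs_le {q : ℝ × ℝ × ℝ} {r : ℝ} :
    q ∈ Metric.closedBall 0 r ↔ |q.1| ≤ r ∧ |q.2.1| ≤ r ∧ |q.2.2| ≤ r := by
  simp only [mem_closedBall_zero_iff, norm_prod_le_iff, Real.norm_eq_abs]

def markovCubic (q : ℝ × ℝ × ℝ) : ℝ :=
  q.1 ^ 2 + q.2.1 ^ 2 + q.2.2 ^ 2 - q.1 * q.2.1 * q.2.2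

@[simp]
theorem braidEquiv₁_apply (q : ℝ × ℝ × ℝ) :
    braidEquiv₁ q = (-q.1, q.2.2 - q.1 * q.2.1, q.2.1) := rfl

@[simp]
theorem braidEquiv₁_inv_apply (q : ℝ × ℝ × ℝ) :
    braidEquiv₁⁻¹ q = (-q.1, q.2.2, q.2.1 - q.1 * q.2.2) := rfl

@[simp]
theorem braidEquiv₂_apply (q : ℝ × ℝ × ℝ) :
    braidEquiv₂ q = (q.2.2, -q.2.1, q.1 - q.2.1 * q.2.2) := rfl

theorem continuous_braidEquiv₁ : Continuous braidEquiv₁ := by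
  simp_rw [funext braidEquiv₁_apply]; fun_prop

theorem continuous_braidEquiv₁_inv : Continuous (braidEquiv₁⁻¹ : Equiv.Perm (ℝ × ℝ × ℝ)) := by
  simp_rw [funext braidEquiv₁_inv_apply]; fun_prop

theorem continuous_braidEquiv₂ : Continuous braidEquiv₂ := by
  simp_rw [funext braidEquiv₂_apply]; fun_prop

theorem braidEquiv₁_mem_braidSubgroup : braidEquiv₁ ∈ braidSubgroup :=
  Subgroup.subset_closure (Set.mem_insert _ _)

theorem braidEquiv₂_mem_braidSubgroup : braidEquiv₂ ∈ braidSubgroup :=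
  Subgroup.subset_closure (Set.mem_insert_of_mem _ rfl)

theorem markovCubic_apply_of_mem_braidSubgroup {g : Equiv.Perm (ℝ × ℝ × ℝ)}
    (hg : g ∈ braidSubgroup) (q : ℝ × ℝ × ℝ) : markovCubic (g q) = markovCubic q := by
  induction hg using Subgroup.closure_induction generalizing q with
  | mem g hg =>
    rcases hg with rfl | rfl <;> simp only [markovCubic, braidEquiv₁_apply, braidEquiv₂_apply] <;>
      ring
  | one => rfl
  | mul g h _ _ hg hh => rw [Equiv.Perm.mul_apply, hg, hh]
  | inv g _ hg => simpa using (hg (g⁻¹ q)).symm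

theorem markovCubic_le_four_of_pos {x y z : ℝ} (hxyz : 0 < x * y * z)
    (hxy : x ^ 2 * y ^ 2 ≤ 2 * (x * y * z)) (hxz : x ^ 2 * z ^ 2 ≤ 2 * (x * y * z))
    (hx : x ^ 2 ≤ 4) (hyx : y ^ 2 ≤ x ^ 2) :
    x ^ 2 + y ^ 2 + z ^ 2 - x * y * z ≤ 4 := by
  have hxy0 : 0 < x ^ 2 * y ^ 2 := by
    have : x * y ≠ 0 := by rintro h; simp [h] at hxyz
    rw [← mul_pow]; exact pow_two_pos_of_ne_zero this
  have hxyz_le : x * y * z ≤ 2 * y ^ 2 := by nlinarith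
  have hfac₁ : 0 ≤ y * (2 * y - x * z) := by nlinarith
  have hfac₂ : 0 ≤ y * (2 * y + x * z - x ^ 2 * y) := by nlinarith
  have hfac₃ : y ^ 2 * (x ^ 2 - 4) * (x ^ 2 - y ^ 2) ≤ 0 :=
    mul_nonpos_of_nonpos_of_nonneg (mul_nonpos_of_nonneg_of_nonpos (sq_nonneg y) (by linarith))
      (by linarith)
  have key : x ^ 2 * y ^ 2 * (x ^ 2 + y ^ 2 + z ^ 2 - x * y * z - 4) =
      y ^ 2 * (x ^ 2 - 4) * (x ^ 2 - y ^ 2) -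
        y * (2 * y - x * z) * (y * (2 * y + x * z - x ^ 2 * y)) := by ring
  nlinarith [mul_nonneg hfac₁ hfac₂]

theorem markovCubic_le_four_of_vieta {x y z : ℝ} (hx : x ^ 2 ≤ 4) (hy : y ^ 2 ≤ 4)
    (hz : z ^ 2 ≤ 4) (hvx : (y * z - x) ^ 2 ≤ x ^ 2) (hvy : (x * z - y) ^ 2 ≤ y ^ 2)
    (hvz : (x * y - z) ^ 2 ≤ z ^ 2) : markovCubic (x, y, z) ≤ 4 := by
  have hxy : x ^ 2 * y ^ 2 ≤ 2 * (x * y * z) := by linarith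
  have hxz : x ^ 2 * z ^ 2 ≤ 2 * (x * y * z) := by linarith
  have hyz : y ^ 2 * z ^ 2 ≤ 2 * (x * y * z) := by linarith
  simp only [markovCubic]
  rcases (show 0 ≤ x * y * z by nlinarith [sq_nonneg (x * y)]).eq_or_lt with h0 | hpos
  · -- the pairwise products vanish, so `(x² + y² + z²)² = x⁴ + y⁴ + z⁴ ≤ 4 (x² + y² + z²)`
    nlinarith [mul_nonneg (sub_nonneg.2 hx) (sq_nonneg x), mul_nonneg (sub_nonneg.2 hy) (sq_nonneg y),
      mul_nonneg (sub_nonneg.2 hz) (sq_nonneg z), sq_nonneg (x * y), sq_nonneg (x * z),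
      sq_nonneg (y * z)]
  · rcases le_total (y ^ 2) (x ^ 2) with hyx | hxy'
    · exact markovCubic_le_four_of_pos hpos hxy hxz hx hyx
    · have := markovCubic_le_four_of_pos (x := y) (y := x) (z := z) (by linarith) (by linarith)
        (by linarith) hy hxy'
      linarith

theorem markovCubic_le_four_of_isMaxOn {K : Set (ℝ × ℝ × ℝ)} {q : ℝ × ℝ × ℝ}
    (hmax : IsMaxOn (fun r : ℝ × ℝ × ℝ => r.1 ^ 2 + r.2.1 ^ 2 + r.2.2 ^ 2) K q)
    (h₁ : braidEquiv₁ q ∈ K) (h₁' : braidEquiv₁⁻¹ q ∈ K) (h₂ : braidEquiv₂ q ∈ K)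
    (hq : |q.1| ≤ 2 ∧ |q.2.1| ≤ 2 ∧ |q.2.2| ≤ 2) : markovCubic q ≤ 4 := by
  obtain ⟨x, y, z⟩ := q
  have hvz := hmax h₁
  have hvy := hmax h₁'
  have hvx := hmax h₂
  simp only [Set.mem_ofPred_eq, braidEquiv₁_apply, braidEquiv₁_inv_apply, braidEquiv₂_apply]
    at hvx hvy hvz
  simp only [abs_le] at hq
  refine markovCubic_le_four_of_vieta ?_ ?_ ?_ ?_ ?_ ?_ <;> nlinarith

theorem algebraic_lemma_general (p : ℝ × ℝ × ℝ)
    (hgt : 4 < p.1 ^ 2 + p.2.1 ^ 2 + p.2.2 ^ 2 - p.1 * p.2.1 * p.2.2) :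
    ∃ g ∈ braidSubgroup,
      2 < |(g p).1| ∨ 2 < |(g p).2.1| ∨ 2 < |(g p).2.2| := by
  by_contra! horbit
  set K := closure (MulAction.orbit braidSubgroup p)
  have hKball : K ⊆ Metric.closedBall 0 2 :=
    closure_minimal (by rintro _ ⟨g, rfl⟩; exact mem_closedBall_zero_iff_abs_le.2 (horbit g g.2))
      Metric.isClosed_closedBall
  obtain ⟨q, hqK, hmax⟩ :=
    ((isCompact_closedBall 0 2).of_isClosed_subset isClosed_closure hKball).exists_isMaxOn
      ⟨p, subset_closure (MulAction.mem_orbit_self p)⟩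
      (f := fun r : ℝ × ℝ × ℝ => r.1 ^ 2 + r.2.1 ^ 2 + r.2.2 ^ 2) (by fun_prop)
  have hκ : markovCubic q = markovCubic p :=
    eq_of_mem_closure_orbit (by unfold markovCubic; fun_prop)
      (fun g hg => markovCubic_apply_of_mem_braidSubgroup hg) hqK
  have hκ_le := markovCubic_le_four_of_isMaxOn hmax
    (apply_mem_closure_orbit braidEquiv₁_mem_braidSubgroup continuous_braidEquiv₁ hqK)
    (apply_mem_closure_orbit (inv_mem braidEquiv₁_mem_braidSubgroup) continuous_braidEquiv₁_inv hqK)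
    (apply_mem_closure_orbit braidEquiv₂_mem_braidSubgroup continuous_braidEquiv₂ hqK)
    (mem_closedBall_zero_iff_abs_le.1 (hKball hqK))
  exact (hκ ▸ hκ_le).not_gt hgt

/-- **Algebraic Lemma.** If an admissible triple of real numbers satisfies
`x² + y² + z² - xyz > 4` and `|x|, |y|, |z| ≤ 2`, then some braid image of it has a
coordinate of absolute value strictly greater than `2`. -/
theorem algebraic_lemma (p : ℝ × ℝ × ℝ) (hadm : Admissible p)
    (hgt : 4 < p.1 ^ 2 + p.2.1 ^ 2 + p.2.2 ^ 2 - p.1 * p.2.1 * p.2.2)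
    (hb1 : |p.1| ≤ 2) (hb2 : |p.2.1| ≤ 2) (hb3 : |p.2.2| ≤ 2) :
    ∃ g ∈ braidSubgroup,
      2 < |(g p).1| ∨ 2 < |(g p).2.1| ∨ 2 < |(g p).2.2| :=
  algebraic_lemma_general p hgt
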